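/- Let (N, K, v) be a P-extendable incomplete cooperative game with K intersection-closed and N ∈ K. Then the IC-game v_IC, defined by v_IC(S) = v(c_K(S)) for every S ⊆ N, is a monotone extension of (N, K, v): it satisfies v_IC(S) ≤ v_IC(T) whenever S ⊆ T ⊆ N, and v_IC(S) = v(S) for every S ∈ K. -/
import Mathlib


open Finset

variable {α : Type*} [Fintype α] [DecidableEq α]

/-- A set system is intersection-closed if it is closed under pairwise intersections. -/
def InterClosed (K : Finset (Finset α)) : Prop :=
  ∀ S ∈ K, ∀ T ∈ K, S ∩ T ∈ K

/-- The closure `c_K(T) = ⋂ {S ∈ K : T ⊆ S}` of a coalition `T` in the set system `K`. -/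
def cl (K : Finset (Finset α)) (T : Finset α) : Finset α :=
  (K.filter fun S => T ⊆ S).inf id

/-- The family `C(T)` of coalitions indistinguishable from `T`. -/
def classOf (K : Finset (Finset α)) (T : Finset α) : Finset (Finset α) :=
  Finset.univ.filter fun X => cl K X = cl K T

/-- The Harsanyi dividend `d_w(S) = w S - ∑_{T ⊊ S} d_w(T)`. -/
noncomputable def dividend (w : Finset α → ℝ) (S : Finset α) : ℝ :=
  w S - ∑ T ∈ (S.powerset.erase S).attach, dividend w T.1
termination_by S.card
decreasing_by
  have h := T.2
  simp only [mem_erase, mem_powerset] at h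
  exact Finset.card_lt_card (h.2.ssubset_of_ne h.1)

/-- The surplus `Δ_v(S) = v S - ∑_{T ∈ K, T ⊊ S} Δ_v(T)` for `S ∈ K`. -/
noncomputable def Delta (K : Finset (Finset α)) (v : Finset α → ℝ) (S : Finset α) : ℝ :=
  v S - ∑ T ∈ (K.filter fun T => T ⊂ S).attach, Delta K v T.1
termination_by S.card
decreasing_by
  have h := T.2
  simp only [mem_filter] at h
  exact Finset.card_lt_card h.2

/-- A δ-system for the incomplete game `(N, K, v)`. -/
def IsDeltaSystem (K : Finset (Finset α)) (v δ : Finset α → ℝ) : Prop :=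
  (∀ S ∈ K, ∑ T ∈ S.powerset, δ T = v S) ∧
  ∀ S T : Finset α, cl K S = cl K T → δ S = δ T

/-- The payoff `Φ_i = ∑_{S ∋ i} δ(S)/|S|` computed from a dividend function `δ`. -/
noncomputable def UDofDelta (δ : Finset α → ℝ) (i : α) : ℝ :=
  ∑ S ∈ Finset.univ.filter (fun S => i ∈ S), δ S / S.card

/-- The complete game whose Harsanyi dividends are `δ`. -/
def gameOf (δ : Finset α → ℝ) (S : Finset α) : ℝ := ∑ T ∈ S.powerset, δ T

/-- A P-extension: a positive cooperative game agreeing with `v` on `K`. -/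
def PExtension (K : Finset (Finset α)) (v w : Finset α → ℝ) : Prop :=
  w ∅ = 0 ∧ (∀ S, 0 ≤ dividend w S) ∧ ∀ S ∈ K, w S = v S

/-- P-extendability of an incomplete game. -/
def PExtendable (K : Finset (Finset α)) (v : Finset α → ℝ) : Prop :=
  ∃ w, PExtension K v w

/-- The Shapley value `φ_i(w) = ∑_{S ∋ i} d_w(S)/|S|`. -/
noncomputable def shapley (w : Finset α → ℝ) (i : α) : ℝ :=
  ∑ S ∈ Finset.univ.filter (fun S => i ∈ S), dividend w S / S.card

lemma my_game_eq_sum_dividend (w : Finset α → ℝ) (S : Finset α) :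
    w S = ∑ T ∈ S.powerset, dividend w T := by
  have hd : dividend w S = w S - ∑ T ∈ S.powerset.erase S, dividend w T := by
    rw [dividend, Finset.sum_attach (S.powerset.erase S) (fun T => dividend w T)]
  have hS : S ∈ S.powerset := Finset.mem_powerset_self S
  rw [← Finset.sum_erase_add _ _ hS]
  linarith

lemma my_monotone_of_pos (w : Finset α → ℝ) (hpos : ∀ S, 0 ≤ dividend w S)
    {S T : Finset α} (hST : S ⊆ T) : w S ≤ w T := by
  rw [my_game_eq_sum_dividend w S, my_game_eq_sum_dividend w T]
  exact Finset.sum_le_sum_of_subset_of_nonneg (Finset.powerset_mono.2 hST)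
    (fun A _ _ => hpos A)

lemma my_inf_mem (K : Finset (Finset α)) (hIC : InterClosed K)
    {F : Finset (Finset α)} (hF : F ⊆ K) (hne : F.Nonempty) : F.inf id ∈ K := by
  induction hne using Finset.Nonempty.cons_induction with
  | singleton a => simpa using hF (Finset.mem_singleton_self a)
  | cons a s ha hs ih =>
    rw [Finset.inf_cons]
    have haK : a ∈ K := hF (Finset.mem_cons_self a s)
    have hsK : s ⊆ K := fun x hx => hF (Finset.mem_cons_of_mem hx)
    exact hIC a haK _ (ih hsK)

lemma my_cl_mem (K : Finset (Finset α)) (hIC : InterClosed K)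
    (hN : (Finset.univ : Finset α) ∈ K) (T : Finset α) : cl K T ∈ K := by
  apply my_inf_mem K hIC (Finset.filter_subset _ _)
  exact ⟨Finset.univ, Finset.mem_filter.2 ⟨hN, Finset.subset_univ T⟩⟩

lemma my_subset_cl (K : Finset (Finset α)) (T : Finset α) : T ⊆ cl K T :=
  show T ≤ cl K T from Finset.le_inf fun S hS => (Finset.mem_filter.1 hS).2

lemma my_cl_eq_self (K : Finset (Finset α)) {S : Finset α} (hS : S ∈ K) :
    cl K S = S :=
  le_antisymm (Finset.inf_le (Finset.mem_filter.2 ⟨hS, subset_rfl⟩)) (my_subset_cl K S)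

lemma my_cl_mono (K : Finset (Finset α)) {S T : Finset α} (h : S ⊆ T) :
    cl K S ⊆ cl K T := by
  show cl K S ≤ cl K T
  apply Finset.le_inf
  intro A hA
  rw [Finset.mem_filter] at hA
  exact Finset.inf_le (Finset.mem_filter.2 ⟨hA.1, h.trans hA.2⟩)

/-- the IC-game `v_IC(S) = v(c_K(S))` is a monotone extension of
`(N, K, v)`. -/
theorem icGame_is_monotone_extension (K : Finset (Finset α))
    (hIC : InterClosed K) (hempty : ∅ ∈ K) (hN : (Finset.univ : Finset α) ∈ K)
    (v : Finset α → ℝ) (hv : v ∅ = 0) (hext : PExtendable K v) :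
    (∀ S T : Finset α, S ⊆ T → v (cl K S) ≤ v (cl K T)) ∧
      ∀ S ∈ K, v (cl K S) = v S := by
  obtain ⟨w, _, hpos, hagree⟩ := hext
  refine ⟨fun S T hST => ?_, fun S hS => by rw [my_cl_eq_self K hS]⟩
  rw [← hagree _ (my_cl_mem K hIC hN S), ← hagree _ (my_cl_mem K hIC hN T)]
  exact my_monotone_of_pos w hpos (my_cl_mono K hST)
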